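/- arXiv:1103.5775 — 4 statements merged into one kernel-verified Lean document; each statement's English description precedes it below -/
import Mathlib

section
/- With notation as above ($z=\exp(i\pi/m)$, $\varphi_n = (1,z^n,\dots,z^{(m-1)n})^T$, $\mathbb{B}$ having eigenbasis $e^{(j)}=(1,z^{k_j},\dots,z^{k_j(m-1)})^T$ with eigenvalues $(-1)^{k_j}$, and $\mathbb{K} = \{k_j + 2mp : 1\leq j\leq m,\ p\in\mathbb{Z}_{\geq 0}\}$): for every integer $n\geq 0$, if $n\in\mathbb{K}$ then $\mathrm{Sp}(\varphi_n\overline{\varphi}_n^T \mathbb{B}) = (-1)^n m$, and if $n\notin\mathbb{K}$ then $\mathrm{Sp}(\varphi_n\overline{\varphi}_n^T \mathbb{B}) = (-1)^{n+1} m$. -/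
open Complex Matrix

theorem stmt_6 (m : ℕ) (hm : 1 ≤ m) (k : Fin m → ℕ)
    (hmono : StrictMono k) (hk : ∀ j, k j ≤ 2 * m - 1)
    (z : ℂ) (hz : z = Complex.exp (Real.pi * Complex.I / m))
    (W : Matrix (Fin m) (Fin m) ℂ)
    (hW : W = (Matrix.vandermonde (fun j : Fin m => z ^ k j))ᵀ)
    (B : Matrix (Fin m) (Fin m) ℂ)
    (hB : B = W * Matrix.diagonal (fun j : Fin m => ((-1 : ℂ)) ^ k j) * W⁻¹)
    (n : ℕ)
    (Φ : Matrix (Fin m) (Fin m) ℂ)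
    (hΦ : Φ = Matrix.of (fun i j : Fin m =>
      z ^ ((i : ℕ) * n) * (starRingEnd ℂ) (z ^ ((j : ℕ) * n)))) :
    ((∃ j : Fin m, ∃ p : ℕ, n = k j + 2 * m * p) →
        (Φ * B).trace = (-1 : ℂ) ^ n * m) ∧
    ((¬ ∃ j : Fin m, ∃ p : ℕ, n = k j + 2 * m * p) →
        (Φ * B).trace = (-1 : ℂ) ^ (n + 1) * m) := by
  have hm0 : (m : ℂ) ≠ 0 := Nat.cast_ne_zero.mpr (by omega)
  have hzne : z ≠ 0 := by rw [hz]; exact Complex.exp_ne_zero _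
  have hzm : z ^ m = -1 := by
    rw [hz, ← Complex.exp_nat_mul]
    rw [show (m : ℂ) * (Real.pi * Complex.I / m) = Real.pi * Complex.I by
      field_simp]
    exact Complex.exp_pi_mul_I
  have hz2m : z ^ (2 * m) = 1 := by
    rw [mul_comm, pow_mul, hzm]; norm_num
  have hprim : IsPrimitiveRoot z (2 * m) := by
    have h := Complex.isPrimitiveRoot_exp (2 * m) (by omega)
    have : (2 * Real.pi * Complex.I / (((2 * m : ℕ) : ℂ)) : ℂ)
        = Real.pi * Complex.I / m := by
      push_cast; field_simp
    rw [this] at h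
    rwa [hz]
  have hconjz : (starRingEnd ℂ) z = z⁻¹ := by
    rw [hz, ← Complex.exp_conj, ← Complex.exp_neg]
    congr 1
    simp [map_div₀]
    ring
  have hconjpow : ∀ a : ℕ, (starRingEnd ℂ) (z ^ a) = (z ^ a)⁻¹ := by
    intro a; rw [map_pow, hconjz, inv_pow]
  have hsum1 : ∑ a : Fin m, (starRingEnd ℂ) (z ^ ((a : ℕ) * n)) * z ^ ((a : ℕ) * n)
      = (m : ℂ) := by
    rw [Finset.sum_congr rfl (fun a _ => by
      rw [hconjpow, inv_mul_cancel₀ (pow_ne_zero _ hzne)])]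
    simp
  have hklt : ∀ j, k j < 2 * m := fun j => by have := hk j; omega
  have hvinj : Function.Injective fun j : Fin m => z ^ k j := by
    intro a b hab
    exact hmono.injective (hprim.pow_inj (hklt a) (hklt b) hab)
  have hdet : W.det ≠ 0 := by
    rw [hW, Matrix.det_transpose]
    exact Matrix.det_vandermonde_ne_zero_iff.mpr hvinj
  have hU : IsUnit W.det := isUnit_iff_ne_zero.mpr hdet
  have hWW : W * W⁻¹ = 1 := Matrix.mul_nonsing_inv W hU
  have hWW' : W⁻¹ * W = 1 := Matrix.nonsing_inv_mul W hU
  have hBW : B * W = W * Matrix.diagonal (fun j : Fin m => ((-1 : ℂ)) ^ k j) := by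
    rw [hB, Matrix.mul_assoc (W * _) W⁻¹ W, hWW', Matrix.mul_one]
  have hWd : ∀ a j, (W * Matrix.diagonal (fun j : Fin m => ((-1 : ℂ)) ^ k j)) a j
      = W a j * (-1 : ℂ) ^ k j := fun a j => Matrix.mul_diagonal _ _ _ _
  have htr : (Φ * B).trace
      = ∑ a : Fin m, (starRingEnd ℂ) (z ^ ((a : ℕ) * n))
          * ∑ i : Fin m, B a i * z ^ ((i : ℕ) * n) := by
    rw [Matrix.trace]
    simp only [Matrix.diag, Matrix.mul_apply, hΦ, Matrix.of_apply]
    rw [Finset.sum_comm]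
    refine Finset.sum_congr rfl fun a _ => ?_
    rw [Finset.mul_sum]
    exact Finset.sum_congr rfl fun i _ => by ring
  have hWa : ∀ a j, W a j = (z ^ k j) ^ (a : ℕ) := by
    intro a j; rw [hW]; simp [Matrix.vandermonde]
  have hneg1 : ∀ a b : ℕ, a % 2 = b % 2 → ((-1 : ℂ)) ^ a = (-1 : ℂ) ^ b := by
    intro a b h
    rcases Nat.even_or_odd a with ha | ha <;> rcases Nat.even_or_odd b with hb | hb
    · rw [ha.neg_one_pow, hb.neg_one_pow]
    · rw [Nat.even_iff] at ha; rw [Nat.odd_iff] at hb; omega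
    · rw [Nat.odd_iff] at ha; rw [Nat.even_iff] at hb; omega
    · rw [ha.neg_one_pow, hb.neg_one_pow]
  have hneg2 : ∀ a b : ℕ, a % 2 ≠ b % 2 → ((-1 : ℂ)) ^ a = -((-1 : ℂ)) ^ b := by
    intro a b h
    rcases Nat.even_or_odd a with ha | ha <;> rcases Nat.even_or_odd b with hb | hb
    · rw [Nat.even_iff] at ha hb; omega
    · simp [ha.neg_one_pow, hb.neg_one_pow]
    · simp [ha.neg_one_pow, hb.neg_one_pow]
    · rw [Nat.odd_iff] at ha hb; omega
  constructor
  · rintro ⟨j, p, hn⟩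
    have hzn : z ^ n = z ^ k j := by
      rw [hn, pow_add, pow_mul, hz2m, one_pow, mul_one]
    have hφW : ∀ i : Fin m, z ^ ((i : ℕ) * n) = W i j := by
      intro i
      rw [hWa, mul_comm, pow_mul, hzn]
    have hBφ : ∀ a : Fin m, (∑ i : Fin m, B a i * z ^ ((i : ℕ) * n))
        = (-1 : ℂ) ^ k j * z ^ ((a : ℕ) * n) := by
      intro a
      have : (∑ i : Fin m, B a i * W i j) = (B * W) a j := (Matrix.mul_apply).symm
      rw [Finset.sum_congr rfl (fun i _ => by rw [hφW i]), this, hBW, hWd, ← hφW a]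
      ring
    rw [htr, Finset.sum_congr rfl (fun a _ => by rw [hBφ a])]
    have : ∑ a : Fin m, (starRingEnd ℂ) (z ^ ((a : ℕ) * n))
        * ((-1 : ℂ) ^ k j * z ^ ((a : ℕ) * n))
        = (-1 : ℂ) ^ k j * ∑ a : Fin m,
            (starRingEnd ℂ) (z ^ ((a : ℕ) * n)) * z ^ ((a : ℕ) * n) := by
      rw [Finset.mul_sum]; exact Finset.sum_congr rfl fun a _ => by ring
    rw [this, hsum1]
    have : ((-1 : ℂ)) ^ n = (-1 : ℂ) ^ k j := hneg1 n (k j) (by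
      rw [hn, mul_assoc, Nat.add_mul_mod_self_left])
    rw [this]
  · intro hnot
    -- coordinates of φ in the eigenbasis
    set c : Fin m → ℂ := W⁻¹ *ᵥ (fun i : Fin m => z ^ ((i : ℕ) * n)) with hc
    have hWc : W *ᵥ c = (fun i : Fin m => z ^ ((i : ℕ) * n)) := by
      rw [hc, Matrix.mulVec_mulVec, hWW, Matrix.one_mulVec]
    have hWc' : ∀ i : Fin m, ∑ j : Fin m, W i j * c j = z ^ ((i : ℕ) * n) := by
      intro i
      have := congrFun hWc i
      simpa [Matrix.mulVec, dotProduct] using this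
    -- the inner products S j
    set S : Fin m → ℂ := fun j => ∑ a : Fin m,
        (starRingEnd ℂ) (z ^ ((a : ℕ) * n)) * W a j with hS
    have hkey : ∀ j : Fin m, (-1 : ℂ) ^ k j * S j = -((-1 : ℂ) ^ n) * S j := by
      intro j
      by_cases hpar : k j % 2 = n % 2
      · -- same parity : S j = 0
        have hwm : ((starRingEnd ℂ) (z ^ n) * z ^ k j) ^ m = 1 := by
          have h1 : ((z : ℂ) ^ n) ^ m = (-1 : ℂ) ^ n := by
            rw [← pow_mul, mul_comm n m, pow_mul, hzm]
          have h2 : ((z : ℂ) ^ k j) ^ m = (-1 : ℂ) ^ k j := by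
            rw [← pow_mul, mul_comm (k j) m, pow_mul, hzm]
          rw [mul_pow, hconjpow, inv_pow, h1, h2, hneg1 (k j) n hpar]
          exact inv_mul_cancel₀ (pow_ne_zero _ (by norm_num))
        have hwne : (starRingEnd ℂ) (z ^ n) * z ^ k j ≠ 1 := by
          intro hcon
          have hz1 : z ^ k j = z ^ n := by
            have := congrArg (fun t => z ^ n * t) hcon
            simp only [mul_one] at this
            rw [← mul_assoc, hconjpow] at this
            rw [mul_inv_cancel₀ (pow_ne_zero _ hzne), one_mul] at this
            exact this
          have hzn' : z ^ n = z ^ (n % (2 * m)) := by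
            conv_lhs => rw [show n = 2 * m * (n / (2 * m)) + n % (2 * m) from
              (Nat.div_add_mod n (2 * m)).symm]
            rw [pow_add, pow_mul, hz2m, one_pow, one_mul]
          have hmod : k j = n % (2 * m) := by
            apply hprim.pow_inj (hklt j) (Nat.mod_lt _ (by omega))
            rw [hz1, hzn']
          exact hnot ⟨j, n / (2 * m), by
            rw [hmod]; exact (Nat.mod_add_div n (2 * m)).symm⟩
        have hS0 : S j = 0 := by
          have : S j = ∑ a : Fin m, ((starRingEnd ℂ) (z ^ n) * z ^ k j) ^ (a : ℕ) := by
            refine Finset.sum_congr rfl fun a _ => ?_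
            rw [hWa, mul_pow, ← map_pow, ← pow_mul, mul_comm (k j) (a : ℕ),
              mul_comm (a : ℕ) n, pow_mul]
          rw [this, Fin.sum_univ_eq_sum_range (fun i => ((starRingEnd ℂ) (z ^ n) * z ^ k j) ^ i)]
          rw [geom_sum_eq hwne, hwm]
          simp
        rw [hS0]; ring
      · rw [hneg2 (k j) n hpar]
    have hBφ : ∀ a : Fin m, (∑ i : Fin m, B a i * z ^ ((i : ℕ) * n))
        = ∑ j : Fin m, (-1 : ℂ) ^ k j * (W a j * c j) := by
      intro a
      calc (∑ i : Fin m, B a i * z ^ ((i : ℕ) * n))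
          = ∑ i : Fin m, B a i * ∑ j : Fin m, W i j * c j := by
            refine Finset.sum_congr rfl fun i _ => by rw [hWc' i]
        _ = ∑ i : Fin m, ∑ j : Fin m, B a i * (W i j * c j) := by
            refine Finset.sum_congr rfl fun i _ => by rw [Finset.mul_sum]
        _ = ∑ j : Fin m, ∑ i : Fin m, B a i * (W i j * c j) := Finset.sum_comm
        _ = ∑ j : Fin m, (∑ i : Fin m, B a i * W i j) * c j := by
            refine Finset.sum_congr rfl fun j _ => ?_
            rw [Finset.sum_mul]
            exact Finset.sum_congr rfl fun i _ => by ring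
        _ = ∑ j : Fin m, (-1 : ℂ) ^ k j * (W a j * c j) := by
            refine Finset.sum_congr rfl fun j _ => ?_
            rw [show (∑ i : Fin m, B a i * W i j) = (B * W) a j from (Matrix.mul_apply).symm,
              hBW, hWd]
            ring
    have htr2 : (Φ * B).trace = ∑ j : Fin m, (-1 : ℂ) ^ k j * (c j * S j) := by
      rw [htr]
      calc (∑ a : Fin m, (starRingEnd ℂ) (z ^ ((a : ℕ) * n))
              * ∑ i : Fin m, B a i * z ^ ((i : ℕ) * n))
          = ∑ a : Fin m, ∑ j : Fin m, (starRingEnd ℂ) (z ^ ((a : ℕ) * n))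
              * ((-1 : ℂ) ^ k j * (W a j * c j)) := by
            refine Finset.sum_congr rfl fun a _ => ?_
            rw [hBφ a, Finset.mul_sum]
        _ = ∑ j : Fin m, ∑ a : Fin m, (starRingEnd ℂ) (z ^ ((a : ℕ) * n))
              * ((-1 : ℂ) ^ k j * (W a j * c j)) := Finset.sum_comm
        _ = ∑ j : Fin m, (-1 : ℂ) ^ k j * (c j * S j) := by
            refine Finset.sum_congr rfl fun j _ => ?_
            rw [hS, Finset.mul_sum, Finset.mul_sum]
            exact Finset.sum_congr rfl fun a _ => by ring
    rw [htr2, Finset.sum_congr rfl (fun j _ => by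
      rw [show (-1 : ℂ) ^ k j * (c j * S j) = ((-1 : ℂ) ^ k j * S j) * c j from by ring,
        hkey j])]
    have : ∑ j : Fin m, -(-1 : ℂ) ^ n * S j * c j
        = -(-1 : ℂ) ^ n * ∑ j : Fin m, c j * S j := by
      rw [Finset.mul_sum]
      exact Finset.sum_congr rfl fun j _ => by ring
    rw [this]
    have hcs : ∑ j : Fin m, c j * S j = (m : ℂ) := by
      calc ∑ j : Fin m, c j * S j
          = ∑ j : Fin m, ∑ a : Fin m,
              (starRingEnd ℂ) (z ^ ((a : ℕ) * n)) * (W a j * c j) := by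
            refine Finset.sum_congr rfl fun j _ => ?_
            rw [hS, Finset.mul_sum]
            exact Finset.sum_congr rfl fun a _ => by ring
        _ = ∑ a : Fin m, ∑ j : Fin m,
              (starRingEnd ℂ) (z ^ ((a : ℕ) * n)) * (W a j * c j) := Finset.sum_comm
        _ = ∑ a : Fin m, (starRingEnd ℂ) (z ^ ((a : ℕ) * n)) * z ^ ((a : ℕ) * n) := by
            refine Finset.sum_congr rfl fun a _ => ?_
            rw [← Finset.mul_sum, hWc' a]
        _ = (m : ℂ) := hsum1
    rw [hcs, pow_succ]
    ring
end

section
/- Let $m\geq 1$, $z = \exp(i\pi/m)$, $0\leq k_1 < \cdots < k_m \leq 2m-1$. Let $\mathbb{P}_{\beta\alpha} = \frac{1}{1+z^{\beta-\alpha}}$ and $\mathbb{B} = \mathbb{W}\,\mathrm{diag}[(-1)^{k_1},\dots,(-1)^{k_m}]\,\mathbb{W}^{-1}$, where $\mathbb{W}$ is the Vandermonde matrix of $z^{k_1},\dots,z^{k_m}$. Then $\mathrm{Sp}(\mathbb{P}\mathbb{B}) = \frac{m(2m-1)}{2} - \sum_{j=1}^m k_j$. -/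
/-!
Let `ψ` be the additive character `a ↦ z ^ a` of `ℤ/2m` and `c a = (1 + ψ a)⁻¹`. Each vector
`g ↦ ψ (κ g)` is an eigenvector of the `2m × 2m` circulant matrix `(c (m + b - g))_{b,g}`, with
eigenvalue `λ κ = ∑ d, c d ψ (κ (m - d))`. Splitting `ℤ/2m` into `{0, …, m-1}` and its shift by `m`,
and using `ψ (k m) = (-1) ^ k`, the eigenvalue equations become the `m × m` identity
`P W D = W Λ - N W` with `N` of zero diagonal, so `P B = W Λ W⁻¹ - N` and `Sp (P B) = ∑ j, λ k_j`.
Finally `λ (κ + 1) = λ κ - 1` for `κ + 1 ≠ 0` by orthogonality of characters, and `2 λ 0 = 2m - 1`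
by pairing `d` with `-d`, whence `λ k = (2m - 1)/2 - k`.
-/

open Complex Matrix

open Finset

lemma ZMod.sum_univ_two_mul {M : Type*} [AddCommMonoid M] {m : ℕ} [NeZero m]
    (F : ZMod (2 * m) → M) : ∑ g, F g = ∑ i : Fin m, (F (i : ℕ) + F ((i : ℕ) + m)) := by
  have hrange : ∑ g, F g = ∑ i ∈ range (2 * m), F i :=
    (sum_nbij' (fun i : ℕ => (i : ZMod (2 * m))) ZMod.val (by simp) (by simp [ZMod.val_lt])
      (fun i hi => ZMod.val_cast_of_lt (mem_range.mp hi)) (by simp) (by simp)).symm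
  rw [hrange, show range (2 * m) = range (m + m) by rw [two_mul], sum_range_add,
    Fin.sum_univ_eq_sum_range (fun i => F i + F (i + m)), sum_add_distrib]
  simp only [Nat.cast_add, add_comm]

lemma Matrix.trace_eq_sub_of_mul_eq {n R : Type*} [Fintype n] [DecidableEq n] [CommRing R]
    {A W E N : Matrix n n R} (hW : IsUnit W.det) (h : A * W = W * E - N * W) :
    A.trace = E.trace - N.trace := by
  have hA : A = W * E * W⁻¹ - N := by
    rw [← mul_nonsing_inv_cancel_right W A hW, h, Matrix.sub_mul,
      mul_nonsing_inv_cancel_right W N hW]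
  rw [hA, trace_sub, trace_mul_comm, ← Matrix.mul_assoc, nonsing_inv_mul _ hW, Matrix.one_mul]

lemma AddChar.zmodChar_intCast {C : Type*} [DivisionCommMonoid C] {n : ℕ} [NeZero n] {ζ : C}
    (hζ : ζ ^ n = 1) (a : ℤ) : zmodChar n hζ a = ζ ^ a := by
  rw [← zsmul_one, map_zsmul_eq_zpow, ← Nat.cast_one, zmodChar_apply', pow_one]

namespace AddChar

variable {K : Type*} [Field K] {m : ℕ} [NeZero m] {ψ : AddChar (ZMod (2 * m)) K}

lemma IsPrimitive.injective (hψ : ψ.IsPrimitive) : Function.Injective ψ :=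
  injective_iff.mpr fun a ha => (hψ.zmod_char_eq_one_iff _ a).mp ha

lemma IsPrimitive.map_natCast_half (hψ : ψ.IsPrimitive) : ψ m = -1 := by
  have hsq : ψ m ^ 2 = 1 := by
    rw [← map_nsmul_eq_pow, nsmul_eq_mul]
    exact_mod_cast (congrArg ψ (ZMod.natCast_self (2 * m))).trans ψ.map_zero_eq_one
  have hne : ψ m ≠ 1 := by
    rw [Ne, hψ.zmod_char_eq_one_iff, ZMod.natCast_eq_zero_iff]
    exact fun h => by have := Nat.le_of_dvd (NeZero.pos m) h; have := NeZero.pos m; omega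
  exact (sq_eq_one_iff.mp hsq).resolve_left hne

variable (ψ) in
def invOneAdd (a : ZMod (2 * m)) : K := (1 + ψ a)⁻¹

/- `m` is the pole of `invOneAdd ψ`, where `0⁻¹ = 0`; this convention lets all the sums below run
over the whole of `ZMod (2 * m)`, the pole contributing nothing. -/
lemma IsPrimitive.invOneAdd_natCast_half (hψ : ψ.IsPrimitive) : ψ.invOneAdd m = 0 := by
  rw [invOneAdd, hψ.map_natCast_half, add_neg_cancel, _root_.inv_zero]

lemma IsPrimitive.one_add_ne_zero (hψ : ψ.IsPrimitive) {a : ZMod (2 * m)} (ha : a ≠ m) :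
    1 + ψ a ≠ 0 := fun h =>
  ha <| hψ.injective <| by rw [hψ.map_natCast_half]; linear_combination h

lemma IsPrimitive.invOneAdd_add_invOneAdd_neg (hψ : ψ.IsPrimitive) (a : ZMod (2 * m)) :
    ψ.invOneAdd a + ψ.invOneAdd (-a) = if a = m then 0 else 1 := by
  split_ifs with ha
  · rw [ha, hψ.invOneAdd_natCast_half, invOneAdd, map_neg_eq_inv, hψ.map_natCast_half]
    norm_num
  · have h0 : ψ a ≠ 0 := (ψ.val_isUnit a).ne_zero
    have h1 := hψ.one_add_ne_zero ha
    have h2 : 1 + (ψ a)⁻¹ = (1 + ψ a) / ψ a := by field_simp; ring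
    rw [invOneAdd, invOneAdd, map_neg_eq_inv, h2, inv_div]
    field_simp

variable (ψ) in
def circulantEigenvalue (κ : ZMod (2 * m)) : K := ∑ d, ψ.invOneAdd d * ψ (κ * (m - d))

lemma sum_invOneAdd_mul (b κ : ZMod (2 * m)) :
    ∑ g, ψ.invOneAdd (m + b - g) * ψ (κ * g) = ψ (κ * b) * ψ.circulantEigenvalue κ := by
  rw [circulantEigenvalue, mul_sum]
  refine Fintype.sum_equiv (Equiv.subLeft (m + b)) _ _ fun g => ?_
  have : κ * g = κ * b + κ * (m - (m + b - g)) := by ring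
  rw [Equiv.subLeft_apply, this, map_add_eq_mul]
  ring

lemma IsPrimitive.two_mul_circulantEigenvalue_zero (hψ : ψ.IsPrimitive) :
    2 * ψ.circulantEigenvalue 0 = 2 * m - 1 := by
  simp only [circulantEigenvalue, zero_mul, map_zero_eq_one, mul_one]
  calc 2 * ∑ d, ψ.invOneAdd d = ∑ d, (ψ.invOneAdd d + ψ.invOneAdd (-d)) := by
        rw [sum_add_distrib, two_mul,
          Fintype.sum_equiv (Equiv.neg _) _ (fun d => ψ.invOneAdd (-d)) (by simp)]
    _ = ∑ d : ZMod (2 * m), if d = m then 0 else 1 := by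
        simp only [hψ.invOneAdd_add_invOneAdd_neg]
    _ = 2 * m - 1 := by
        rw [Finset.sum_ite, sum_const_zero, zero_add, sum_const, nsmul_one, Finset.filter_ne',
          card_erase_of_mem (mem_univ _), card_univ, ZMod.card]
        have := NeZero.pos m
        push_cast [Nat.cast_sub (by omega : 1 ≤ 2 * m)]
        ring

lemma IsPrimitive.circulantEigenvalue_add_one (hψ : ψ.IsPrimitive) {κ : ZMod (2 * m)}
    (hκ : κ + 1 ≠ 0) : ψ.circulantEigenvalue (κ + 1) = ψ.circulantEigenvalue κ - 1 := by
  have hterm : ∀ d, ψ.invOneAdd d * ψ ((κ + 1) * (m - d)) = ψ.invOneAdd d * ψ (κ * (m - d))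
      + ψ ((m - d) * (κ + 1)) - if d = m then 1 else 0 := by
    intro d
    split_ifs with hd
    · simp [hd, hψ.invOneAdd_natCast_half]
    · have h0 : ψ d ≠ 0 := (ψ.val_isUnit d).ne_zero
      have h1 := hψ.one_add_ne_zero hd
      rw [mul_comm (m - d), add_mul, one_mul, map_add_eq_mul, sub_eq_add_neg, map_add_eq_mul,
        hψ.map_natCast_half, map_neg_eq_inv, invOneAdd]
      field_simp
      ring
  have horth : ∑ d : ZMod (2 * m), ψ ((m - d) * (κ + 1)) = 0 := by
    rw [Fintype.sum_equiv (Equiv.subLeft (m : ZMod (2 * m))) (fun d => ψ ((m - d) * (κ + 1)))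
      (fun e => ψ (e * (κ + 1))) (fun _ => rfl), sum_mulShift _ hψ, if_neg hκ, Nat.cast_zero]
  rw [circulantEigenvalue, circulantEigenvalue, Finset.sum_congr rfl fun d _ => hterm d,
    sum_sub_distrib, sum_add_distrib, horth, sum_ite_eq', if_pos (mem_univ _)]
  ring

lemma IsPrimitive.two_mul_circulantEigenvalue_natCast (hψ : ψ.IsPrimitive) {n : ℕ}
    (hn : n < 2 * m) : 2 * ψ.circulantEigenvalue n = 2 * m - 1 - 2 * n := by
  induction n with
  | zero => simpa using hψ.two_mul_circulantEigenvalue_zero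
  | succ n ih =>
    have hne : ((n + 1 : ℕ) : ZMod (2 * m)) ≠ 0 := by
      rw [Ne, ZMod.natCast_eq_zero_iff]
      exact fun h => by have := Nat.le_of_dvd n.succ_pos h; omega
    push_cast at hne ⊢
    rw [hψ.circulantEigenvalue_add_one hne, mul_sub, ih (by omega)]
    ring

variable (ψ) in
def kernelMatrix : Matrix (Fin m) (Fin m) K :=
  of fun β α => ψ.invOneAdd ((β : ℕ) - (α : ℕ))

variable (ψ) in
def shiftedKernelMatrix : Matrix (Fin m) (Fin m) K :=
  of fun β γ => ψ.invOneAdd (m + (β : ℕ) - (γ : ℕ))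

lemma IsPrimitive.kernelMatrix_mul_vandermonde (hψ : ψ.IsPrimitive) (k : Fin m → ℕ) :
    ψ.kernelMatrix * (vandermonde fun j => ψ (k j))ᵀ * diagonal (fun j => (-1) ^ k j) =
      (vandermonde fun j => ψ (k j))ᵀ * diagonal (fun j => ψ.circulantEigenvalue (k j)) -
        ψ.shiftedKernelMatrix * (vandermonde fun j => ψ (k j))ᵀ := by
  ext β j
  have hW : ∀ γ : Fin m, (vandermonde fun j => ψ (k j))ᵀ γ j = ψ (k j * (γ : ℕ)) := by
    intro γ
    rw [transpose_apply, vandermonde_apply, ← map_nsmul_eq_pow, nsmul_eq_mul, Nat.cast_comm]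
  rw [Matrix.sub_apply, mul_diagonal, mul_diagonal, Matrix.mul_apply, Matrix.mul_apply,
    eq_sub_iff_add_eq, hW, ← sum_invOneAdd_mul, ZMod.sum_univ_two_mul, sum_mul,
    ← sum_add_distrib]
  refine sum_congr rfl fun γ _ => ?_
  rw [hW, kernelMatrix, shiftedKernelMatrix, of_apply, of_apply, mul_add, map_add_eq_mul,
    ← hψ.map_natCast_half, ← map_nsmul_eq_pow, nsmul_eq_mul,
    show (m : ZMod (2 * m)) + β - (γ + m) = β - γ by ring]
  ring

lemma IsPrimitive.two_mul_trace_kernelMatrix_mul (hψ : ψ.IsPrimitive) {k : Fin m → ℕ}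
    (hk : ∀ j, k j < 2 * m) (hinj : Function.Injective k) :
    2 * (ψ.kernelMatrix * ((vandermonde fun j => ψ (k j))ᵀ * diagonal (fun j => (-1) ^ k j) *
      (vandermonde fun j => ψ (k j))ᵀ⁻¹)).trace = m * (2 * m - 1) - 2 * ∑ j, (k j : K) := by
  set W := (vandermonde fun j => ψ (k j))ᵀ
  have hW : IsUnit W.det := by
    refine isUnit_iff_ne_zero.mpr ?_
    rw [det_transpose, det_vandermonde_ne_zero_iff]
    refine hψ.injective.comp fun i j hij => hinj ?_
    simpa [ZMod.val_cast_of_lt (hk i), ZMod.val_cast_of_lt (hk j)] using congrArg ZMod.val hij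
  have hN : ψ.shiftedKernelMatrix.trace = 0 := by
    simp [trace, shiftedKernelMatrix, hψ.invOneAdd_natCast_half]
  rw [trace_eq_sub_of_mul_eq hW (E := diagonal fun j => ψ.circulantEigenvalue (k j)), hN,
    sub_zero, trace_diagonal, mul_sum]
  · simp only [hψ.two_mul_circulantEigenvalue_natCast (hk _), sum_sub_distrib, sum_const,
      card_univ, Fintype.card_fin, nsmul_eq_mul, mul_sum]
    ring
  · rw [← hψ.kernelMatrix_mul_vandermonde, Matrix.mul_assoc, nonsing_inv_mul_cancel_right W _ hW,
      Matrix.mul_assoc]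

end AddChar

lemma IsPrimitiveRoot.two_mul_trace_mul_conj_diagonal {K : Type*} [Field K] {m : ℕ} [NeZero m]
    {z : K} (hz : IsPrimitiveRoot z (2 * m)) {k : Fin m → ℕ} (hk : ∀ j, k j < 2 * m)
    (hinj : Function.Injective k) :
    2 * ((of fun β α : Fin m => 1 / (1 + z ^ ((β : ℤ) - (α : ℤ)))) *
      ((vandermonde fun j => z ^ k j)ᵀ * diagonal (fun j => (-1) ^ k j) *
        (vandermonde fun j => z ^ k j)ᵀ⁻¹)).trace = m * (2 * m - 1) - 2 * ∑ j, (k j : K) := by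
  set ψ := AddChar.zmodChar (2 * m) hz.pow_eq_one
  have hW : (vandermonde fun j => z ^ k j) = vandermonde fun j => ψ (k j) := by
    simp [ψ, AddChar.zmodChar_apply']
  have hP : (of fun β α : Fin m => 1 / (1 + z ^ ((β : ℤ) - (α : ℤ)))) = ψ.kernelMatrix := by
    ext β α
    simp [AddChar.kernelMatrix, AddChar.invOneAdd, ψ, ← AddChar.zmodChar_intCast hz.pow_eq_one]
  rw [hW, hP]
  exact (AddChar.zmodChar_primitive_of_primitive_root _ hz).two_mul_trace_kernelMatrix_mul hk hinj

theorem stmt_10 (m : ℕ) (hm : 1 ≤ m) (k : Fin m → ℕ)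
    (hmono : StrictMono k) (hk : ∀ j, k j ≤ 2 * m - 1)
    (z : ℂ) (hz : z = Complex.exp (Real.pi * Complex.I / m))
    (W : Matrix (Fin m) (Fin m) ℂ)
    (hW : W = (Matrix.vandermonde (fun j : Fin m => z ^ k j))ᵀ)
    (B : Matrix (Fin m) (Fin m) ℂ)
    (hB : B = W * Matrix.diagonal (fun j : Fin m => ((-1 : ℂ)) ^ k j) * W⁻¹)
    (P : Matrix (Fin m) (Fin m) ℂ)
    (hP : P = Matrix.of (fun β α : Fin m => 1 / (1 + z ^ ((β : ℤ) - (α : ℤ))))) :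
    (P * B).trace = (m : ℂ) * (2 * m - 1) / 2 - ∑ j, (k j : ℂ) := by
  have : NeZero m := ⟨by omega⟩
  have hprim : IsPrimitiveRoot z (2 * m) := by
    convert Complex.isPrimitiveRoot_exp (2 * m) (by omega) using 2
    rw [hz]
    push_cast
    field_simp
  have h := hprim.two_mul_trace_mul_conj_diagonal (k := k) (fun j => by have := hk j; omega)
    hmono.injective
  rw [← hW, ← hB, ← hP] at h
  linear_combination h / 2
end

section
/- Let $q \in L^\infty(\mathbb{R}_+)$ be real-valued, and suppose $\psi(x) = \frac{1}{x}\int_0^x q(t)\,dt$ has a limit $\psi(0+)$ as $x\to 0^+$. Let $g:\mathbb{R}_+ \to \mathbb{C}$ be of the form $g(y) = c\,\frac{e^{iay} - e^{iby}}{y}$ with $a, b$ in the open upper half plane and $c\in\mathbb{C}$, and suppose additionally $q$ has bounded support. Then $\lim_{s\to\infty} \int_0^\infty q(x)\, g(sx)\, s\, dx = \psi(0+) \int_0^\infty g(y)\,dy$. -/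
/-!
Write `Q x = ∫ t in 0..x, q t` and, for a kernel `g` vanishing at infinity,
`g y = -∫ u in Ioi y, g' u`. Fubini turns `∫ q x * g (s * x) * s` into
`-∫ ψ (u / s) * (u * g' u) du`, where `ψ x = Q x / x` is bounded by `sup |q|`, so dominated
convergence gives the limit `-ψ(0+) * ∫ u * g' u`; the same identity for `q ≡ 1` identifies
`-∫ u * g' u` with `∫ g`. The kernel `c * (exp (I a y) - exp (I b y)) / y` qualifies: it is bounded
near `0` because `exp` is `1`-Lipschitz on the left half-plane, and its numerator decays
exponentially.
-/

open Complex MeasureTheory Filter Set Topology Function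

noncomputable def cesaroMean (q : ℝ → ℝ) (x : ℝ) : ℝ := (1 / x) * ∫ t in (0 : ℝ)..x, q t

section CesaroMean

variable {q : ℝ → ℝ} {M : ℝ}

lemma intervalIntegrable_of_abs_le (hq : Measurable q) (hM : ∀ x, |q x| ≤ M) (a b : ℝ) :
    IntervalIntegrable q volume a b :=
  intervalIntegrable_const.mono_fun' hq.aestronglyMeasurable
    (ae_of_all _ fun x => (Real.norm_eq_abs _).trans_le (hM x))

lemma measurable_cesaroMean (hq : Measurable q) (hM : ∀ x, |q x| ≤ M) :
    Measurable (cesaroMean q) :=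
  (measurable_const.div measurable_id).mul
    (intervalIntegral.continuous_primitive (intervalIntegrable_of_abs_le hq hM) 0).measurable

lemma abs_cesaroMean_le (hM : ∀ x, |q x| ≤ M) {x : ℝ} (hx : 0 < x) : |cesaroMean q x| ≤ M := by
  have h := intervalIntegral.norm_integral_le_of_norm_le_const (a := 0) (b := x)
    fun t _ => (Real.norm_eq_abs (q t)).trans_le (hM t)
  rw [Real.norm_eq_abs, sub_zero, abs_of_pos hx] at h
  rw [cesaroMean, abs_mul, abs_of_pos (one_div_pos.2 hx), one_div, inv_mul_le_iff₀ hx, mul_comm]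
  exact h

lemma tendsto_setIntegral_cesaroMean_comp_div_mul (hq : Measurable q) (hM : ∀ x, |q x| ≤ M)
    {ψ0 : ℝ} (hψ : Tendsto (cesaroMean q) (𝓝[>] 0) (𝓝 ψ0)) {G : ℝ → ℂ}
    (hG : IntegrableOn G (Ioi 0)) :
    Tendsto (fun s => ∫ u in Ioi 0, (cesaroMean q (u / s) : ℂ) * G u) atTop
      (𝓝 (ψ0 * ∫ u in Ioi 0, G u)) := by
  rw [← integral_const_mul]
  refine tendsto_integral_filter_of_dominated_convergence (fun u => M * ‖G u‖)
    (Eventually.of_forall fun s => ?_) ?_ (hG.norm.const_mul M) ?_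
  · exact (Complex.measurable_ofReal.comp ((measurable_cesaroMean hq hM).comp
      (measurable_id.div_const s))).aestronglyMeasurable.mul hG.aestronglyMeasurable
  · filter_upwards [eventually_gt_atTop 0] with s hs
    filter_upwards [ae_restrict_mem measurableSet_Ioi] with u (hu : 0 < u)
    rw [norm_mul, Complex.norm_real, Real.norm_eq_abs]
    exact mul_le_mul_of_nonneg_right (abs_cesaroMean_le hM (div_pos hu hs)) (norm_nonneg _)
  · filter_upwards [ae_restrict_mem measurableSet_Ioi] with u (hu : 0 < u)
    have hdiv : Tendsto (fun s => u / s) atTop (𝓝[>] 0) :=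
      tendsto_nhdsWithin_iff.2 ⟨tendsto_const_nhds.div_atTop tendsto_id,
        (eventually_gt_atTop 0).mono fun s hs => div_pos hu hs⟩
    exact ((Complex.continuous_ofReal.tendsto ψ0).comp (hψ.comp hdiv)).mul_const (G u)

end CesaroMean

section Kernel

variable {g g' : ℝ → ℂ}

lemma integrableOn_Ioi_of_integrableOn_Ioi_zero_mul
    (hint : IntegrableOn (fun u : ℝ => (u : ℂ) * g' u) (Ioi 0)) {y : ℝ} (hy : 0 < y) :
    IntegrableOn g' (Ioi y) := by
  have hsub : Ioi y ⊆ Ioi (0 : ℝ) := Ioi_subset_Ioi hy.le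
  refine IntegrableOn.congr_fun ((hint.mono_set hsub).bdd_mul (f := fun u : ℝ => (u : ℂ)⁻¹)
    (c := y⁻¹) Complex.measurable_ofReal.inv.aestronglyMeasurable ?_) ?_ measurableSet_Ioi
  · filter_upwards [ae_restrict_mem measurableSet_Ioi] with u (hu : y < u)
    rw [norm_inv, Complex.norm_real, Real.norm_of_nonneg (hy.trans hu).le]
    exact inv_anti₀ hy hu.le
  · intro u (hu : y < u)
    have : (u : ℂ) ≠ 0 := Complex.ofReal_ne_zero.2 (hy.trans hu).ne'
    field_simp

lemma aestronglyMeasurable_of_integrableOn_Ioi_zero_mul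
    (hint : IntegrableOn (fun u : ℝ => (u : ℂ) * g' u) (Ioi 0)) :
    AEStronglyMeasurable g' (volume.restrict (Ioi 0)) := by
  refine ((Complex.measurable_ofReal.inv.aestronglyMeasurable (f := fun u : ℝ => (u : ℂ)⁻¹)).mul
    hint.aestronglyMeasurable).congr ?_
  filter_upwards [ae_restrict_mem measurableSet_Ioi] with u (hu : 0 < u)
  have : (u : ℂ) ≠ 0 := Complex.ofReal_ne_zero.2 hu.ne'
  simp only [Pi.mul_apply]
  field_simp

lemma integrable_indicator_lt_mul {q : ℝ → ℝ} (hq : Measurable q) {M : ℝ}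
    (hM : ∀ x, |q x| ≤ M) (hint : IntegrableOn (fun u : ℝ => (u : ℂ) * g' u) (Ioi 0)) :
    Integrable ({p : ℝ × ℝ | p.1 < p.2}.indicator fun p => (q p.1 : ℂ) * g' p.2)
      ((volume.restrict (Ioi 0)).prod (volume.restrict (Ioi 0))) := by
  have hsection (x u : ℝ) :
      {p : ℝ × ℝ | p.1 < p.2}.indicator (fun p => (q p.1 : ℂ) * g' p.2) (x, u) =
        (Iio u).indicator (fun x => (q x : ℂ) * g' u) x := by
    simp [indicator_apply]
  have hpt (x u : ℝ) : ‖(q x : ℂ) * g' u‖ ≤ M * ‖g' u‖ := by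
    rw [norm_mul, Complex.norm_real, Real.norm_eq_abs]
    exact mul_le_mul_of_nonneg_right (hM x) (norm_nonneg _)
  have hmeas : AEStronglyMeasurable
      ({p : ℝ × ℝ | p.1 < p.2}.indicator fun p => (q p.1 : ℂ) * g' p.2)
      ((volume.restrict (Ioi 0)).prod (volume.restrict (Ioi 0))) :=
    ((Complex.measurable_ofReal.comp hq).aestronglyMeasurable.comp_fst.mul
      (aestronglyMeasurable_of_integrableOn_Ioi_zero_mul hint).comp_snd).indicator
      (measurableSet_lt measurable_fst measurable_snd)
  refine (integrable_prod_iff' hmeas).2 ⟨ae_of_all _ fun u => ?_, ?_⟩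
  · simp only [hsection _ u]
    rw [integrable_indicator_iff measurableSet_Iio, IntegrableOn,
      Measure.restrict_restrict measurableSet_Iio, Iio_inter_Ioi]
    exact Measure.integrableOn_of_bounded measure_Ioo_lt_top.ne
      ((Complex.measurable_ofReal.comp hq).mul_const _).aestronglyMeasurable
      (ae_of_all _ fun x => hpt x u)
  · refine (hint.norm.const_mul M).mono' hmeas.norm.prod_swap.integral_prod_right' ?_
    filter_upwards [ae_restrict_mem measurableSet_Ioi] with u (hu : 0 < u)
    simp only [hsection _ u, norm_indicator_eq_indicator_norm]
    rw [setIntegral_indicator measurableSet_Iio, Ioi_inter_Iio]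
    calc ‖∫ x in Ioo 0 u, ‖(q x : ℂ) * g' u‖‖ ≤ M * ‖g' u‖ * volume.real (Ioo 0 u) :=
          norm_setIntegral_le_of_norm_le_const measure_Ioo_lt_top
            fun x _ => (norm_norm _).trans_le (hpt x u)
      _ = M * ‖(u : ℂ) * g' u‖ := by
          rw [Real.volume_real_Ioo_of_le hu.le, norm_mul, Complex.norm_real,
            Real.norm_of_nonneg hu.le]
          ring

variable (hderiv : ∀ u ∈ Ioi (0 : ℝ), HasDerivAt g (g' u) u)
  (hlim : Tendsto g atTop (𝓝 0))
  (hint : IntegrableOn (fun u : ℝ => (u : ℂ) * g' u) (Ioi 0))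
include hderiv hlim hint

lemma eq_neg_setIntegral_Ioi_of_hasDerivAt {y : ℝ} (hy : 0 < y) :
    g y = -∫ u in Ioi y, g' u := by
  rw [integral_Ioi_of_hasDerivAt_of_tendsto (hderiv y hy).continuousAt.continuousWithinAt
    (fun u hu => hderiv u (hy.trans hu)) (integrableOn_Ioi_of_integrableOn_Ioi_zero_mul hint hy)
    hlim, zero_sub, neg_neg]

theorem setIntegral_Ioi_mul_eq_neg_setIntegral_primitive_mul {q : ℝ → ℝ} (hq : Measurable q)
    {M : ℝ} (hM : ∀ x, |q x| ≤ M) :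
    ∫ x in Ioi 0, (q x : ℂ) * g x = -∫ u in Ioi 0, ((∫ t in (0 : ℝ)..u, q t : ℝ) : ℂ) * g' u := by
  set μ := volume.restrict (Ioi (0 : ℝ))
  set F : ℝ → ℝ → ℂ := fun x u =>
    {p : ℝ × ℝ | p.1 < p.2}.indicator (fun p => (q p.1 : ℂ) * g' p.2) (x, u)
  have inner_x (x : ℝ) (hx : x ∈ Ioi 0) : ∫ u, F x u ∂μ = (q x : ℂ) * ∫ u in Ioi x, g' u := by
    have : (fun u => F x u) = (Ioi x).indicator (fun u => (q x : ℂ) * g' u) := by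
      ext u; simp [F, indicator_apply]
    rw [this, setIntegral_indicator measurableSet_Ioi, Ioi_inter_Ioi, sup_eq_right.2 (le_of_lt hx),
      integral_const_mul]
  have inner_u (u : ℝ) (hu : u ∈ Ioi 0) :
      ∫ x, F x u ∂μ = ((∫ t in (0 : ℝ)..u, q t : ℝ) : ℂ) * g' u := by
    have : (fun x => F x u) = fun x => (Iio u).indicator (fun x => (q x : ℂ)) x * g' u := by
      ext x; simp [F, indicator_apply]
    rw [this, integral_mul_const, setIntegral_indicator measurableSet_Iio, Ioi_inter_Iio,
      integral_complex_ofReal, intervalIntegral.integral_of_le (le_of_lt hu),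
      integral_Ioc_eq_integral_Ioo]
  calc ∫ x in Ioi 0, (q x : ℂ) * g x = ∫ x, -∫ u, F x u ∂μ ∂μ :=
        setIntegral_congr_fun measurableSet_Ioi fun x hx => by
          rw [inner_x x hx, eq_neg_setIntegral_Ioi_of_hasDerivAt hderiv hlim hint hx, mul_neg]
    _ = -∫ u, ∫ x, F x u ∂μ ∂μ := by
        rw [integral_neg, integral_integral_swap (f := F) (integrable_indicator_lt_mul hq hM hint)]
    _ = _ := by rw [setIntegral_congr_fun measurableSet_Ioi inner_u]

variable {q : ℝ → ℝ} {M : ℝ} (hq : Measurable q) (hM : ∀ x, |q x| ≤ M)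
include hq hM

lemma setIntegral_Ioi_mul_comp_mul_eq {s : ℝ} (hs : 0 < s) :
    ∫ x in Ioi 0, (q x : ℂ) * g (s * x) * s =
      -∫ u in Ioi 0, (cesaroMean q (u / s) : ℂ) * ((u : ℂ) * g' u) := by
  have hscale : ∫ x in Ioi 0, (q x : ℂ) * g (s * x) * s = ∫ u in Ioi 0, (q (u / s) : ℂ) * g u := by
    have := integral_comp_mul_left_Ioi (fun u => (q (u / s) : ℂ) * g u * s) 0 hs
    simp only [mul_zero, mul_div_cancel_left₀ _ hs.ne'] at this
    have hs' : (s : ℂ) ≠ 0 := Complex.ofReal_ne_zero.2 hs.ne'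
    rw [this, integral_mul_const, Complex.real_smul]
    push_cast
    field_simp
  rw [hscale, setIntegral_Ioi_mul_eq_neg_setIntegral_primitive_mul hderiv hlim hint
    (q := fun x => q (x / s)) (by fun_prop) (fun x => hM _)]
  congr 1
  refine setIntegral_congr_fun measurableSet_Ioi fun u (hu : 0 < u) => ?_
  have hu' : (u : ℂ) ≠ 0 := Complex.ofReal_ne_zero.2 hu.ne'
  rw [intervalIntegral.integral_comp_div (fun t => q t) hs.ne', zero_div, cesaroMean, smul_eq_mul]
  push_cast
  field_simp

theorem tendsto_setIntegral_mul_comp_mul_atTop {ψ0 : ℝ}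
    (hψ : Tendsto (cesaroMean q) (𝓝[>] 0) (𝓝 ψ0)) :
    Tendsto (fun s : ℝ => ∫ x in Ioi 0, (q x : ℂ) * g (s * x) * s) atTop
      (𝓝 (ψ0 * ∫ y in Ioi 0, g y)) := by
  have hg : ∫ y in Ioi 0, g y = -∫ u in Ioi (0 : ℝ), (u : ℂ) * g' u := by
    simpa using setIntegral_Ioi_mul_eq_neg_setIntegral_primitive_mul hderiv hlim hint
      (q := fun _ => 1) measurable_const (M := 1) (fun _ => by simp)
  rw [hg, mul_neg]
  refine (tendsto_setIntegral_cesaroMean_comp_div_mul hq hM hψ hint).neg.congr' ?_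
  filter_upwards [eventually_gt_atTop 0] with s hs
  rw [setIntegral_Ioi_mul_comp_mul_eq hderiv hlim hint hq hM hs]

end Kernel

lemma norm_cexp_sub_cexp_le {z w : ℂ} (hz : z.re ≤ 0) (hw : w.re ≤ 0) :
    ‖exp z - exp w‖ ≤ ‖z - w‖ := by
  simpa using (convex_halfSpace_re_le 0).norm_image_sub_le_of_norm_hasDerivWithin_le
    (f := exp) (C := 1) (fun x _ => (hasDerivAt_exp x).hasDerivWithinAt)
    (fun x (hx : x.re ≤ 0) => by rw [norm_exp]; exact Real.exp_le_one_iff.2 hx) hw hz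

section ExpDiffKernel

variable {a b c : ℂ}

lemma re_I_mul_mul_ofReal (a : ℂ) (y : ℝ) : (I * a * y).re = -(a.im * y) := by simp

lemma hasDerivAt_cexp_I_mul (a : ℂ) (y : ℝ) :
    HasDerivAt (fun y : ℝ => exp (I * a * y)) (I * a * exp (I * a * y)) y := by
  simpa [mul_comm] using ((hasDerivAt_id y).ofReal_comp.const_mul (I * a)).cexp

lemma integrableOn_cexp_I_mul_Ioi (ha : 0 < a.im) :
    IntegrableOn (fun y : ℝ => exp (I * a * y)) (Ioi 0) :=
  integrableOn_exp_mul_complex_Ioi (by simpa using ha) 0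

lemma tendsto_cexp_I_mul_atTop (ha : 0 < a.im) :
    Tendsto (fun y : ℝ => exp (I * a * y)) atTop (𝓝 0) := by
  rw [tendsto_exp_nhds_zero_iff]
  simp only [re_I_mul_mul_ofReal]
  exact tendsto_neg_atTop_atBot.comp (tendsto_id.const_mul_atTop ha)

noncomputable def expDiffKernel (a b c : ℂ) (y : ℝ) : ℂ :=
  c * (exp (I * a * y) - exp (I * b * y)) / y

lemma hasDerivAt_expDiffKernel {u : ℝ} (hu : u ≠ 0) :
    HasDerivAt (expDiffKernel a b c)
      ((c * (I * a * exp (I * a * u) - I * b * exp (I * b * u)) - expDiffKernel a b c u) / u)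
      u := by
  have hu' : (u : ℂ) ≠ 0 := Complex.ofReal_ne_zero.2 hu
  refine ((((hasDerivAt_cexp_I_mul a u).sub (hasDerivAt_cexp_I_mul b u)).const_mul c).div
    (hasDerivAt_id u).ofReal_comp hu').congr_deriv ?_
  simp only [expDiffKernel, id, Pi.sub_apply, ofReal_one]
  field_simp

lemma norm_expDiffKernel_le (ha : 0 < a.im) (hb : 0 < b.im) {y : ℝ} (hy : 0 < y) :
    ‖expDiffKernel a b c y‖ ≤ ‖c‖ * ‖a - b‖ := by
  have hre (z : ℂ) (hz : 0 < z.im) : (I * z * y).re ≤ 0 := by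
    rw [re_I_mul_mul_ofReal]; nlinarith
  have key := norm_cexp_sub_cexp_le (hre a ha) (hre b hb)
  rw [← sub_mul, ← mul_sub, norm_mul, norm_mul, norm_I, one_mul, Complex.norm_real,
    Real.norm_of_nonneg hy.le] at key
  rw [expDiffKernel, norm_div, norm_mul, Complex.norm_real, Real.norm_of_nonneg hy.le,
    mul_div_assoc]
  exact mul_le_mul_of_nonneg_left ((div_le_iff₀ hy).2 key) (norm_nonneg c)

lemma tendsto_expDiffKernel_atTop (ha : 0 < a.im) (hb : 0 < b.im) :
    Tendsto (expDiffKernel a b c) atTop (𝓝 0) := by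
  have hnum := ((tendsto_cexp_I_mul_atTop ha).sub (tendsto_cexp_I_mul_atTop hb)).const_mul c
  have hinv := (Complex.continuous_ofReal.tendsto 0).comp tendsto_inv_atTop_zero
  have := hnum.mul hinv
  rw [sub_self, mul_zero, zero_mul] at this
  exact this.congr fun y => by simp [expDiffKernel, div_eq_mul_inv]

lemma integrableOn_expDiffKernel (ha : 0 < a.im) (hb : 0 < b.im) :
    IntegrableOn (expDiffKernel a b c) (Ioi 0) := by
  have hmeas : Measurable (expDiffKernel a b c) := by
    unfold expDiffKernel; fun_prop
  have hnum : IntegrableOn (fun y : ℝ => c * (exp (I * a * y) - exp (I * b * y))) (Ioi 0) :=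
    ((integrableOn_cexp_I_mul_Ioi ha).sub (integrableOn_cexp_I_mul_Ioi hb)).const_mul c
  rw [← Ioc_union_Ioi_eq_Ioi zero_le_one]
  refine IntegrableOn.union ?_ ?_
  · exact Measure.integrableOn_of_bounded measure_Ioc_lt_top.ne hmeas.aestronglyMeasurable
      ((ae_restrict_mem measurableSet_Ioc).mono fun y hy => norm_expDiffKernel_le ha hb hy.1)
  · refine (hnum.mono_set (Ioi_subset_Ioi zero_le_one)).norm.mono' hmeas.aestronglyMeasurable ?_
    filter_upwards [ae_restrict_mem measurableSet_Ioi] with y (hy : 1 < y)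
    rw [expDiffKernel, norm_div, Complex.norm_real, Real.norm_of_nonneg (by linarith)]
    exact div_le_self (norm_nonneg _) hy.le

lemma integrableOn_mul_deriv_expDiffKernel (ha : 0 < a.im) (hb : 0 < b.im) :
    IntegrableOn (fun u : ℝ => (u : ℂ) *
      ((c * (I * a * exp (I * a * u) - I * b * exp (I * b * u)) - expDiffKernel a b c u) / u))
      (Ioi 0) := by
  refine IntegrableOn.congr_fun ((((integrableOn_cexp_I_mul_Ioi ha).const_mul (I * a)).sub
    ((integrableOn_cexp_I_mul_Ioi hb).const_mul (I * b))).const_mul c |>.sub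
    (integrableOn_expDiffKernel (c := c) ha hb)) (fun u (hu : 0 < u) => ?_) measurableSet_Ioi
  have hu' : (u : ℂ) ≠ 0 := Complex.ofReal_ne_zero.2 hu.ne'
  simp only [Pi.sub_apply]
  field_simp

end ExpDiffKernel

theorem stmt_14_general (q : ℝ → ℝ) (hq : Measurable q)
    (M : ℝ) (hM : ∀ x, |q x| ≤ M)
    (ψ0 : ℝ)
    (hψ : Filter.Tendsto (fun x : ℝ => (1 / x) * ∫ t in (0 : ℝ)..x, q t)
      (nhdsWithin 0 (Set.Ioi 0)) (nhds ψ0))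
    (a b c : ℂ) (ha : 0 < a.im) (hb : 0 < b.im)
    (g : ℝ → ℂ)
    (hg : ∀ y : ℝ, g y =
      c * (Complex.exp (Complex.I * a * y) - Complex.exp (Complex.I * b * y)) / y) :
    Filter.Tendsto
      (fun s : ℝ => ∫ x in Set.Ioi (0 : ℝ), (q x : ℂ) * g (s * x) * s)
      atTop (nhds ((ψ0 : ℂ) * ∫ y in Set.Ioi (0 : ℝ), g y)) := by
  obtain rfl : g = expDiffKernel a b c := funext hg
  exact tendsto_setIntegral_mul_comp_mul_atTop
    (fun u hu => hasDerivAt_expDiffKernel (ne_of_gt hu)) (tendsto_expDiffKernel_atTop ha hb)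
    (integrableOn_mul_deriv_expDiffKernel ha hb) hq hM hψ

theorem stmt_14 (q : ℝ → ℝ) (hq : Measurable q)
    (M : ℝ) (hM : ∀ x, |q x| ≤ M)
    (R : ℝ) (hsupp : ∀ x, R < x → q x = 0)
    (ψ0 : ℝ)
    (hψ : Filter.Tendsto (fun x : ℝ => (1 / x) * ∫ t in (0 : ℝ)..x, q t)
      (nhdsWithin 0 (Set.Ioi 0)) (nhds ψ0))
    (a b c : ℂ) (ha : 0 < a.im) (hb : 0 < b.im)
    (g : ℝ → ℂ)
    (hg : ∀ y : ℝ, g y =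
      c * (Complex.exp (Complex.I * a * y) - Complex.exp (Complex.I * b * y)) / y) :
    Filter.Tendsto
      (fun s : ℝ => ∫ x in Set.Ioi (0 : ℝ), (q x : ℂ) * g (s * x) * s)
      atTop (nhds ((ψ0 : ℂ) * ∫ y in Set.Ioi (0 : ℝ), g y)) :=
  stmt_14_general q hq M hM ψ0 hψ a b c ha hb g hg
end

section
/- Let $m\geq 1$, $z=\exp(i\pi/m)$, $0\leq k_1 < \cdots < k_m \leq 2m-1$, $\varkappa = \sum_j k_j$. With $\mathbb{P}_{\beta\alpha} = \frac{1}{1+z^{\beta-\alpha}}$ and $\mathbb{B} = \mathbb{W}\,\mathrm{diag}[(-1)^{k_1},\dots,(-1)^{k_m}]\,\mathbb{W}^{-1}$ ($\mathbb{W}$ the Vandermonde matrix of $z^{k_1},\dots,z^{k_m}$): $-\frac{1}{2m}\,\mathrm{Sp}(\mathbb{P}\mathbb{B}) = -\Big(\frac{m}{2} - \frac{1}{4} - \frac{\varkappa}{2m}\Big)$. -/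
/-!
`z` is a primitive `2m`-th root of unity. Let `F` be the first `m` rows of the Fourier matrix
`(z ^ (i r))_{i,r<2m}` and `G` the first `m` columns of its inverse `((2m)⁻¹ z ^ (-r a))`.
For `x = z ^ (β - α)` we have `x ≠ -1` and `(-x) ^ (2m) = 1`, so the arithmetico-geometric sum
over `r < 2m` gives `1 / (1 + x) = -(2m)⁻¹ ∑ r (-x) ^ r`, i.e. `P = -F N T G` with `N = diag r`
and `T = diag ((-1) ^ r)`. As `z ^ m = -1`, `F T` and `T G` are the remaining rows and columns of
the two Fourier matrices, so `G F + T (G F) T = 1`. The columns of `W` are the columns `k j` of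
`F`, and `T` passes through them as the involution `diag ((-1) ^ k j)`. Hence `T G B F` is
`S W⁻¹ F - G F`, with `S` selecting the columns `k j`, and
`Sp (P B) = ∑ r (G F) r r - κ = m (2m - 1) / 2 - κ` because `(G F) r r = 1 / 2`.
-/

open Complex Matrix Finset

theorem mul_sub_one_mul_sum_range_mul_pow {R : Type*} [CommRing R] (y : R) (n : ℕ) :
    (y - 1) * ∑ r ∈ range n, (r : R) * y ^ r = n * y ^ n - y * ∑ r ∈ range n, y ^ r := by
  induction n with
  | zero => simp
  | succ n ih =>
    rw [sum_range_succ, sum_range_succ, mul_add, ih]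
    push_cast
    ring

theorem sum_range_mul_pow_of_pow_eq_one {K : Type*} [Field K] {y : K} {n : ℕ} (hy : y ≠ 1)
    (hyn : y ^ n = 1) : ∑ r ∈ range n, (r : K) * y ^ r = n / (y - 1) := by
  have hgeom : ∑ r ∈ range n, y ^ r = 0 := by rw [geom_sum_eq hy, hyn, sub_self, zero_div]
  rw [eq_div_iff (sub_ne_zero.mpr hy), mul_comm, mul_sub_one_mul_sum_range_mul_pow, hyn, hgeom]
  ring

theorem sum_range_two_mul_natCast {R : Type*} [CommRing R] (m : ℕ) :
    ∑ r ∈ range (2 * m), (r : R) = m * (2 * m - 1) := by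
  induction m with
  | zero => simp
  | succ m ih =>
    rw [show 2 * (m + 1) = 2 * m + 1 + 1 by ring, sum_range_succ, sum_range_succ, ih]
    push_cast
    ring

theorem diagonal_neg_one_pow_mul_self {n R : Type*} [Fintype n] [DecidableEq n] [Ring R]
    (f : n → ℕ) : diagonal (fun i => (-1 : R) ^ f i) * diagonal (fun i => (-1) ^ f i) = 1 := by
  rw [diagonal_mul_diagonal, ← diagonal_one]
  congr 1
  funext i
  rw [← pow_add, Even.neg_one_pow ⟨f i, rfl⟩]

theorem diagonal_mul_one_submatrix {n l R : Type*} [Fintype n] [Fintype l] [DecidableEq n]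
    [DecidableEq l] [Semiring R] (d : n → R) (e : l → n) :
    diagonal d * (1 : Matrix n n R).submatrix id e =
      (1 : Matrix n n R).submatrix id e * diagonal (d ∘ e) := by
  ext r j
  rw [diagonal_mul, mul_diagonal, submatrix_apply, id, one_apply, Function.comp_apply]
  split_ifs with h <;> simp [h]

namespace IsPrimitiveRoot

variable {K : Type*} [Field K] {z : K}

theorem sum_range_pow_inv_pow_mul_pow {n : ℕ} (hz : IsPrimitiveRoot z n) {r s : ℕ} (hr : r < n)
    (hs : s < n) : ∑ i ∈ range n, (z⁻¹ ^ r * z ^ s) ^ i = if r = s then (n : K) else 0 := by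
  have hz0 : z ≠ 0 := hz.ne_zero (by omega)
  split_ifs with hrs
  · simp [hrs, hz0]
  · have hy : z⁻¹ ^ r * z ^ s ≠ 1 := by
      rw [inv_pow, Ne, inv_mul_eq_one₀ (pow_ne_zero _ hz0)]
      exact fun h => hrs (hz.pow_inj hr hs h)
    have hyn : (z⁻¹ ^ r * z ^ s) ^ n = 1 := by
      rw [show (z⁻¹ ^ r * z ^ s) ^ n = (z ^ n)⁻¹ ^ r * (z ^ n) ^ s by ring, hz.pow_eq_one]
      simp
    rw [geom_sum_eq hy, hyn, sub_self, zero_div]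

theorem pow_half_eq_neg_one {m : ℕ} (hz : IsPrimitiveRoot z (2 * m)) (hm : 0 < m) :
    z ^ m = -1 :=
  (hz.pow (by omega) (mul_comm 2 m)).eq_neg_one_of_two_right

end IsPrimitiveRoot

section Fourier

variable {K : Type*} [Field K] {m : ℕ} {z : K}

def dftRows (z : K) (m : ℕ) : Matrix (Fin m) (Fin (2 * m)) K :=
  of fun i r => z ^ ((i : ℕ) * r)

def idftCols (z : K) (m : ℕ) : Matrix (Fin (2 * m)) (Fin m) K :=
  of fun r a => ((2 * m : ℕ) : K)⁻¹ * z⁻¹ ^ ((r : ℕ) * a)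

theorem idftCols_mul_dftRows_apply (r s : Fin (2 * m)) :
    (idftCols z m * dftRows z m) r s =
      ((2 * m : ℕ) : K)⁻¹ * ∑ i ∈ range m, (z⁻¹ ^ (r : ℕ) * z ^ (s : ℕ)) ^ i := by
  rw [mul_apply, mul_sum, ← Fin.sum_univ_eq_sum_range]
  refine sum_congr rfl fun i _ => ?_
  simp only [idftCols, dftRows, of_apply]
  rw [mul_assoc, mul_pow, ← pow_mul, ← pow_mul, mul_comm (s : ℕ)]

variable [CharZero K]

theorem idftCols_mul_dftRows_apply_self (hz : IsPrimitiveRoot z (2 * m)) (r : Fin (2 * m)) :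
    (idftCols z m * dftRows z m) r r = 1 / 2 := by
  have hm : m ≠ 0 := by have := r.isLt; omega
  rw [idftCols_mul_dftRows_apply, inv_pow,
    inv_mul_cancel₀ (pow_ne_zero _ (hz.ne_zero (by omega)))]
  simp only [one_pow, sum_const, card_range, nsmul_eq_mul, mul_one]
  push_cast
  field_simp

theorem diagonal_neg_one_pow_mul_idftCols_mul_dftRows_mul_self
    (hz : IsPrimitiveRoot z (2 * m)) :
    diagonal (fun r : Fin (2 * m) => (-1 : K) ^ (r : ℕ)) * (idftCols z m * dftRows z m) *
        diagonal (fun r : Fin (2 * m) => (-1) ^ (r : ℕ)) =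
      1 - idftCols z m * dftRows z m := by
  ext r s
  have hm : 0 < m := by have := r.isLt; omega
  have hym : (z⁻¹ ^ (r : ℕ) * z ^ (s : ℕ)) ^ m = (-1) ^ (r : ℕ) * (-1) ^ (s : ℕ) := by
    calc (z⁻¹ ^ (r : ℕ) * z ^ (s : ℕ)) ^ m
        = (z ^ m)⁻¹ ^ (r : ℕ) * (z ^ m) ^ (s : ℕ) := by ring
      _ = _ := by rw [hz.pow_half_eq_neg_one hm, inv_neg_one]
  have horth := hz.sum_range_pow_inv_pow_mul_pow r.isLt s.isLt
  simp only [two_mul m, sum_range_add, pow_add, hym, ← mul_sum] at horth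
  have hm0 : (m : K) ≠ 0 := by exact_mod_cast hm.ne'
  rw [mul_diagonal, diagonal_mul, Matrix.sub_apply, one_apply, idftCols_mul_dftRows_apply]
  by_cases hrs : r = s
  · subst hrs
    simp only [if_true] at horth ⊢
    push_cast at horth ⊢
    linear_combination (norm := (field_simp; ring)) (2 * m : K)⁻¹ * horth
  · rw [if_neg (Fin.val_ne_of_ne hrs)] at horth
    rw [if_neg hrs]
    linear_combination ((2 * m : ℕ) : K)⁻¹ * horth

theorem of_one_div_one_add_zpow_sub (hz : IsPrimitiveRoot z (2 * m)) :
    of (fun β α : Fin m => 1 / (1 + z ^ ((β : ℤ) - α))) =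
      -(dftRows z m * diagonal (fun r : Fin (2 * m) => (r : K) * (-1) ^ (r : ℕ)) *
        idftCols z m) := by
  ext β α
  have hm : 0 < m := by have := β.isLt; omega
  have hz0 : z ≠ 0 := hz.ne_zero (by omega)
  set x := z ^ (β : ℕ) * z⁻¹ ^ (α : ℕ) with hx
  have hzx : z ^ ((β : ℤ) - α) = x := by
    rw [zpow_sub₀ hz0, zpow_natCast, zpow_natCast, div_eq_mul_inv, ← inv_pow]
  have hx1 : -x ≠ 1 := by
    intro h
    have hβα : z ^ (β : ℕ) = z ^ ((α : ℕ) + m) := by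
      rw [hx, inv_pow] at h
      field_simp at h
      rw [pow_add, hz.pow_half_eq_neg_one hm]
      linear_combination -h
    have := hz.pow_inj (by omega) (by omega) hβα
    omega
  have hxn : (-x) ^ (2 * m) = 1 := by
    rw [show (-x) ^ (2 * m) = (z ^ (2 * m)) ^ (β : ℕ) * (z ^ (2 * m))⁻¹ ^ (α : ℕ) by
      rw [hx, Even.neg_pow ⟨m, two_mul m⟩]; ring, hz.pow_eq_one]
    simp
  have hsum := sum_range_mul_pow_of_pow_eq_one hx1 hxn
  rw [← Fin.sum_univ_eq_sum_range (fun r => (r : K) * (-x) ^ r)] at hsum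
  have hterm (r : Fin (2 * m)) :
      dftRows z m β r * ((r : K) * (-1) ^ (r : ℕ)) * idftCols z m r α =
        ((2 * m : ℕ) : K)⁻¹ * ((r : K) * (-x) ^ (r : ℕ)) := by
    have hxr :
        (-x) ^ (r : ℕ) = (-1) ^ (r : ℕ) * z ^ ((β : ℕ) * r) * z⁻¹ ^ ((r : ℕ) * α) := by
      rw [neg_pow, hx, mul_pow, ← pow_mul, ← pow_mul, mul_comm (α : ℕ), mul_assoc]
    simp only [dftRows, idftCols, of_apply, hxr]
    ring
  rw [of_apply, Matrix.neg_apply, mul_apply, hzx]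
  simp only [mul_diagonal, hterm, ← mul_sum, hsum]
  have h2m : ((2 * m : ℕ) : K) ≠ 0 := by exact_mod_cast (by omega : 2 * m ≠ 0)
  rw [mul_div_assoc', inv_mul_cancel₀ h2m, ← div_neg, neg_sub, sub_neg_eq_add]

section Selection

variable (e : Fin m → Fin (2 * m)) {W : Matrix (Fin m) (Fin m) K}

theorem diagonal_neg_one_pow_mul_idftCols_mul_conj_mul_dftRows (hz : IsPrimitiveRoot z (2 * m))
    (hW : W = dftRows z m * (1 : Matrix (Fin (2 * m)) (Fin (2 * m)) K).submatrix id e)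
    (hWdet : IsUnit W.det) :
    diagonal (fun r : Fin (2 * m) => (-1 : K) ^ (r : ℕ)) *
        (idftCols z m * (W * diagonal (fun j => (-1) ^ (e j : ℕ)) * W⁻¹) * dftRows z m) =
      (1 : Matrix (Fin (2 * m)) (Fin (2 * m)) K).submatrix id e * W⁻¹ * dftRows z m -
        idftCols z m * dftRows z m := by
  set F := dftRows z m
  set G := idftCols z m
  set T : Matrix (Fin (2 * m)) (Fin (2 * m)) K := diagonal fun r => (-1) ^ (r : ℕ)
  set S := (1 : Matrix (Fin (2 * m)) (Fin (2 * m)) K).submatrix id e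
  set D : Matrix (Fin m) (Fin m) K := diagonal fun j => (-1) ^ (e j : ℕ)
  have hTS : T * S = S * D := diagonal_mul_one_submatrix _ e
  have hDD : D * D = 1 := diagonal_neg_one_pow_mul_self _
  have hTC : T * (G * F) = (1 - G * F) * T := by
    rw [← diagonal_neg_one_pow_mul_idftCols_mul_dftRows_mul_self hz, Matrix.mul_assoc _ T,
      diagonal_neg_one_pow_mul_self, Matrix.mul_one]
  calc T * (G * (W * D * W⁻¹) * F) = T * (G * F) * S * D * W⁻¹ * F := by
        simp only [hW, Matrix.mul_assoc]
    _ = (1 - G * F) * S * (D * D) * W⁻¹ * F := by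
        rw [hTC, Matrix.mul_assoc _ T, hTS]
        simp only [Matrix.mul_assoc]
    _ = S * W⁻¹ * F - G * (F * S) * W⁻¹ * F := by
        rw [hDD]
        simp only [Matrix.sub_mul, Matrix.mul_assoc, Matrix.mul_one, Matrix.one_mul]
    _ = S * W⁻¹ * F - G * F := by
        rw [← hW, Matrix.mul_assoc G, mul_nonsing_inv W hWdet, Matrix.mul_one]

theorem trace_dftRows_mul_diagonal_mul_idftCols_mul_conj (hz : IsPrimitiveRoot z (2 * m))
    (hW : W = dftRows z m * (1 : Matrix (Fin (2 * m)) (Fin (2 * m)) K).submatrix id e)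
    (hWdet : IsUnit W.det) :
    (dftRows z m * diagonal (fun r : Fin (2 * m) => (r : K) * (-1) ^ (r : ℕ)) * idftCols z m *
        (W * diagonal (fun j => (-1) ^ (e j : ℕ)) * W⁻¹)).trace =
      ∑ j, (e j : K) - m * (2 * m - 1) / 2 := by
  set F := dftRows z m
  set G := idftCols z m
  set N : Matrix (Fin (2 * m)) (Fin (2 * m)) K := diagonal fun r => (r : K)
  set T : Matrix (Fin (2 * m)) (Fin (2 * m)) K := diagonal fun r => (-1) ^ (r : ℕ)
  set S := (1 : Matrix (Fin (2 * m)) (Fin (2 * m)) K).submatrix id e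
  set B := W * diagonal (fun j => (-1 : K) ^ (e j : ℕ)) * W⁻¹
  have hNS : N * S = S * diagonal fun j => (e j : K) := diagonal_mul_one_submatrix _ e
  have htrS : (N * (S * W⁻¹ * F)).trace = ∑ j, (e j : K) := by
    rw [show N * (S * W⁻¹ * F) = N * S * (W⁻¹ * F) by simp only [Matrix.mul_assoc],
      trace_mul_comm, hNS,
      show W⁻¹ * F * (S * diagonal fun j => (e j : K)) =
          W⁻¹ * (F * S) * diagonal fun j => (e j : K) by simp only [Matrix.mul_assoc],
      ← hW, nonsing_inv_mul W hWdet, Matrix.one_mul, trace_diagonal]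
  have htrC : (N * (G * F)).trace = m * (2 * m - 1) / 2 := by
    simp only [trace, Matrix.diag, N, G, F, diagonal_mul, idftCols_mul_dftRows_apply_self hz,
      ← sum_mul, Fin.sum_univ_eq_sum_range (fun r => (r : K)), sum_range_two_mul_natCast]
    ring
  rw [← diagonal_mul_diagonal]
  calc (F * (N * T) * G * B).trace = (N * (T * (G * B * F))).trace := by
        rw [Matrix.mul_assoc, Matrix.mul_assoc, trace_mul_comm]
        simp only [Matrix.mul_assoc]
    _ = (N * (S * W⁻¹ * F)).trace - (N * (G * F)).trace := by
        rw [diagonal_neg_one_pow_mul_idftCols_mul_conj_mul_dftRows e hz hW hWdet, Matrix.mul_sub,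
          trace_sub]
    _ = _ := by rw [htrS, htrC]

end Selection

end Fourier

theorem stmt_17 (m : ℕ) (hm : 1 ≤ m) (k : Fin m → ℕ)
    (hmono : StrictMono k) (hk : ∀ j, k j ≤ 2 * m - 1)
    (z : ℂ) (hz : z = Complex.exp (Real.pi * Complex.I / m))
    (W : Matrix (Fin m) (Fin m) ℂ)
    (hW : W = (Matrix.vandermonde (fun j : Fin m => z ^ k j))ᵀ)
    (B : Matrix (Fin m) (Fin m) ℂ)
    (hB : B = W * Matrix.diagonal (fun j : Fin m => ((-1 : ℂ)) ^ k j) * W⁻¹)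
    (P : Matrix (Fin m) (Fin m) ℂ)
    (hP : P = Matrix.of (fun β α : Fin m => 1 / (1 + z ^ ((β : ℤ) - (α : ℤ)))))
    (κ : ℕ) (hκ : κ = ∑ j, k j) :
    -(1 / (2 * (m : ℂ))) * (P * B).trace =
      -((m : ℂ) / 2 - 1 / 4 - (κ : ℂ) / (2 * m)) := by
  have hm0 : (m : ℂ) ≠ 0 := by exact_mod_cast (by omega : m ≠ 0)
  have hprim : IsPrimitiveRoot z (2 * m) := by
    rw [hz, show (Real.pi * I / m : ℂ) = 2 * Real.pi * I / ((2 * m : ℕ) : ℂ) by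
      push_cast; field_simp]
    exact isPrimitiveRoot_exp _ (by omega)
  set e : Fin m → Fin (2 * m) := fun j => ⟨k j, by have := hk j; omega⟩
  have hWe : W = dftRows z m * (1 : Matrix (Fin (2 * m)) (Fin (2 * m)) ℂ).submatrix id e := by
    refine hW.trans (Eq.trans ?_ (mul_submatrix_one (Equiv.refl _) e _).symm)
    ext i j
    simp [dftRows, e, vandermonde_apply, ← pow_mul, mul_comm]
  have hWdet : IsUnit W.det := by
    rw [hW, det_transpose, isUnit_iff_ne_zero, det_vandermonde_ne_zero_iff]
    exact fun i j h => hmono.injective (hprim.pow_inj (e i).isLt (e j).isLt h)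
  rw [hP, hB, of_one_div_one_add_zpow_sub hprim, Matrix.neg_mul, trace_neg,
    trace_dftRows_mul_diagonal_mul_idftCols_mul_conj e hprim hWe hWdet, hκ]
  push_cast
  field_simp
  ring
end
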